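/- Let H : (ℝ → ℝ) → (ℝ → ℝ) map measurable functions to measurable functions and let H₀ : ℝ → ℝ and h ≥ 0 be such that for every c ∈ ℝ the offset operator H_c defined by H_c(v) = H(v + c·𝟙) − H₀(c)·𝟙 is causal and finite-gain stable with gain at most h (so H is finite-gain offset stable with steady-state map H₀ and offset gain at most h). Let u₁ be an L²-bias signal with bias ū₁ and let u₂ be a power signal. Then limsup_{T→∞} (1/T)∫₀ᵀ (H(u₁+u₂)(t) − H₀(ū₁))² dt ≤ h² · limsup_{T→∞} (1/T)∫₀ᵀ u₂(t)² dt; that is, ‖H(u₁+u₂) − H₀(ū₁)·𝟙‖_P ≤ h‖u₂‖_P. -/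

import Mathlib

open MeasureTheory Filter
open scoped ENNReal

/-- Power of a signal: `limsup_{T→∞} (1/T) ∫₀ᵀ u(t)² dt`, in `[0, ∞]`. -/
noncomputable def powerSq (u : ℝ → ℝ) : ℝ≥0∞ :=
  Filter.limsup (fun T : ℝ => ENNReal.ofReal ((1 / T) * ∫ t in Set.Ioc (0 : ℝ) T, (u t) ^ 2))
    Filter.atTop

/-- The truncation `u_T`: equal to `u` on `[0, T]` and `0` elsewhere. -/
noncomputable def trunc (u : ℝ → ℝ) (T : ℝ) : ℝ → ℝ := fun t => if 0 ≤ t ∧ t ≤ T then u t else 0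

/-- `H` is causal: for every input `u` and every `T > 0`, `(H u)(t) = (H u_T)(t)` for
almost every `t ∈ [0, T]`. -/
def Causal (H : (ℝ → ℝ) → ℝ → ℝ) : Prop :=
  ∀ u : ℝ → ℝ, ∀ T : ℝ, 0 < T →
    ∀ᵐ t ∂(volume.restrict (Set.Icc (0 : ℝ) T)), H u t = H (trunc u T) t

/-- Membership of `L²([0,∞))`. -/
def MemL2pos (u : ℝ → ℝ) : Prop := MemLp u 2 (volume.restrict (Set.Ici (0 : ℝ)))

/-- `H` is finite-gain stable with gain `h`. -/
def FGS (H : (ℝ → ℝ) → ℝ → ℝ) (h : ℝ) : Prop :=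
  ∀ u : ℝ → ℝ, MemL2pos u → MemL2pos (H u) ∧
    eLpNorm (H u) 2 (volume.restrict (Set.Ici (0 : ℝ))) ≤
      ENNReal.ofReal h * eLpNorm u 2 (volume.restrict (Set.Ici (0 : ℝ)))

/-- The Heaviside step `𝟙`. -/
noncomputable def heaviside : ℝ → ℝ := fun t => if 0 < t then 1 else 0

/-- The offset operator `H_c(v) = H(v + c·𝟙) − H₀(c)·𝟙`. -/
noncomputable def offsetOp (H : (ℝ → ℝ) → ℝ → ℝ) (H₀ : ℝ → ℝ) (c : ℝ) :
    (ℝ → ℝ) → ℝ → ℝ :=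
  fun v t => H (fun s => v s + c * heaviside s) t - H₀ c * heaviside t

/-! With `w = u₁ - ū₁·𝟙 ∈ L²` one has `H(u₁ + u₂) - H₀(ū₁)·𝟙 = H_{ū₁}(w + u₂)`. On a window
`(0, T]` causality lets the input be replaced by its truncation, to which finite-gain stability
applies: `‖H_{ū₁}(w + u₂)‖_{L²(0,T)} ≤ h (‖w‖_{L²} + ‖u₂‖_{L²(0,T)})`. After normalizing by
`1/√T` the contribution of `w` tends to `0`, and taking `limsup` gives the bound. -/

open Set Topology

namespace ENNReal

lemma limsup_pow {ι : Type*} {f : Filter ι} [f.NeBot] (u : ι → ℝ≥0∞) (n : ℕ) :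
    limsup (fun i => u i ^ n) f = limsup u f ^ n :=
  ((pow_left_mono n).map_limsup_of_continuousAt u (ENNReal.continuous_pow n).continuousAt).symm

lemma sq_ofReal_le_ofReal_sq (x : ℝ) : ENNReal.ofReal x ^ 2 ≤ ENNReal.ofReal (x ^ 2) :=
  calc ENNReal.ofReal x ^ 2 ≤ ENNReal.ofReal |x| ^ 2 := by gcongr; exact le_abs_self x
    _ = ENNReal.ofReal (x ^ 2) := by rw [← ENNReal.ofReal_pow (abs_nonneg x), sq_abs]

end ENNReal

section SquareIntegral

variable {α : Type*} [MeasurableSpace α] {μ : Measure α}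

lemma eLpNorm_two_sq (f : α → ℝ) : eLpNorm f 2 μ ^ 2 = ∫⁻ x, ‖f x‖ₑ ^ 2 ∂μ := by
  simpa using eLpNorm_nnreal_pow_eq_lintegral (f := f) (μ := μ) (p := 2) two_ne_zero

lemma ofReal_integral_sq_le_eLpNorm_two_sq (f : α → ℝ) :
    ENNReal.ofReal (∫ x, f x ^ 2 ∂μ) ≤ eLpNorm f 2 μ ^ 2 := by
  rw [eLpNorm_two_sq, ← Real.enorm_eq_ofReal (integral_nonneg fun x => sq_nonneg (f x))]
  refine (enorm_integral_le_lintegral_enorm _).trans_eq ?_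
  simp only [enorm_pow]

lemma eLpNorm_two_sq_eq_ofReal_integral_sq {f : α → ℝ} (hf : Integrable (fun x => f x ^ 2) μ) :
    eLpNorm f 2 μ ^ 2 = ENNReal.ofReal (∫ x, f x ^ 2 ∂μ) := by
  rw [eLpNorm_two_sq, ofReal_integral_eq_lintegral_ofReal hf (ae_of_all _ fun x => sq_nonneg (f x))]
  simp only [← enorm_pow, Real.enorm_eq_ofReal (sq_nonneg _)]

end SquareIntegral

noncomputable def windowMeasure (T : ℝ) : Measure ℝ :=
  ENNReal.ofReal (1 / T) • volume.restrict (Ioc 0 T)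

lemma eLpNorm_windowMeasure (u : ℝ → ℝ) (T : ℝ) :
    eLpNorm u 2 (windowMeasure T) =
      ENNReal.ofReal (1 / T) ^ (2⁻¹ : ℝ) * eLpNorm u 2 (volume.restrict (Ioc 0 T)) := by
  rw [windowMeasure, eLpNorm_smul_measure_of_ne_top ENNReal.ofNat_ne_top]
  norm_num

lemma eLpNorm_windowMeasure_sq (u : ℝ → ℝ) (T : ℝ) :
    eLpNorm u 2 (windowMeasure T) ^ 2 =
      ENNReal.ofReal (1 / T) * eLpNorm u 2 (volume.restrict (Ioc 0 T)) ^ 2 := by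
  rw [eLpNorm_two_sq, eLpNorm_two_sq, windowMeasure, lintegral_smul_measure, smul_eq_mul]

lemma ofReal_mean_sq_le (u : ℝ → ℝ) (T : ℝ) :
    ENNReal.ofReal (1 / T * ∫ t in Ioc 0 T, u t ^ 2) ≤ eLpNorm u 2 (windowMeasure T) ^ 2 := by
  rw [ENNReal.ofReal_mul' (integral_nonneg fun t => sq_nonneg (u t)), eLpNorm_windowMeasure_sq]
  gcongr
  exact ofReal_integral_sq_le_eLpNorm_two_sq u

lemma ofReal_mean_sq_eq {u : ℝ → ℝ} {T : ℝ} (hu : IntegrableOn (fun t => u t ^ 2) (Ioc 0 T)) :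
    ENNReal.ofReal (1 / T * ∫ t in Ioc 0 T, u t ^ 2) = eLpNorm u 2 (windowMeasure T) ^ 2 := by
  rw [ENNReal.ofReal_mul' (integral_nonneg fun t => sq_nonneg (u t)), eLpNorm_windowMeasure_sq,
    eLpNorm_two_sq_eq_ofReal_integral_sq hu]

lemma powerSq_le_sq_limsup (u : ℝ → ℝ) :
    powerSq u ≤ limsup (fun T => eLpNorm u 2 (windowMeasure T)) atTop ^ 2 := by
  rw [powerSq, ← ENNReal.limsup_pow]
  exact limsup_le_limsup (.of_forall fun T => ofReal_mean_sq_le u T)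

lemma powerSq_eq_sq_limsup {u : ℝ → ℝ}
    (hu : ∀ T : ℝ, 0 < T → IntegrableOn (fun t => u t ^ 2) (Ioc 0 T)) :
    powerSq u = limsup (fun T => eLpNorm u 2 (windowMeasure T)) atTop ^ 2 := by
  rw [powerSq, ← ENNReal.limsup_pow]
  refine limsup_congr ?_
  filter_upwards [eventually_gt_atTop 0] with T hT using ofReal_mean_sq_eq (hu T hT)

lemma tendsto_eLpNorm_windowMeasure_of_memL2pos {w : ℝ → ℝ} (hw : MemL2pos w) :
    Tendsto (fun T => eLpNorm w 2 (windowMeasure T)) atTop (𝓝 0) := by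
  have hinv : Tendsto (fun T : ℝ => ENNReal.ofReal (1 / T)) atTop (𝓝 0) := by
    simpa using ENNReal.tendsto_ofReal tendsto_inv_atTop_zero
  have hscale : Tendsto (fun T : ℝ => ENNReal.ofReal (1 / T) ^ (2⁻¹ : ℝ)) atTop (𝓝 0) := by
    have h := (ENNReal.continuous_rpow_const (y := (2⁻¹ : ℝ))).tendsto 0 |>.comp hinv
    rwa [ENNReal.zero_rpow_of_pos (by norm_num)] at h
  have hbound := ENNReal.Tendsto.mul_const hscale (Or.inr hw.2.ne)
  rw [zero_mul] at hbound
  refine tendsto_of_tendsto_of_tendsto_of_le_of_le tendsto_const_nhds hbound (fun _ => bot_le)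
    fun T => ?_
  rw [eLpNorm_windowMeasure]
  gcongr
  exact Ioc_subset_Ioi_self.trans Ioi_subset_Ici_self

lemma restrict_Ici_restrict_Icc (T : ℝ) :
    (volume.restrict (Ici (0 : ℝ))).restrict (Icc 0 T) = volume.restrict (Ioc 0 T) := by
  rw [Measure.restrict_restrict measurableSet_Icc, inter_eq_left.mpr Icc_subset_Ici_self]
  exact (Measure.restrict_congr_set Ioc_ae_eq_Icc).symm

lemma trunc_eq_indicator (u : ℝ → ℝ) (T : ℝ) : trunc u T = (Icc 0 T).indicator u := by
  ext t
  simp [trunc, indicator]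

lemma memL2pos_trunc_iff {v : ℝ → ℝ} {T : ℝ} :
    MemL2pos (trunc v T) ↔ MemLp v 2 (volume.restrict (Ioc 0 T)) := by
  rw [MemL2pos, trunc_eq_indicator, memLp_indicator_iff_restrict measurableSet_Icc,
    restrict_Ici_restrict_Icc]

lemma eLpNorm_trunc (v : ℝ → ℝ) (T : ℝ) :
    eLpNorm (trunc v T) 2 (volume.restrict (Ici 0)) = eLpNorm v 2 (volume.restrict (Ioc 0 T)) := by
  rw [trunc_eq_indicator, eLpNorm_indicator_eq_eLpNorm_restrict measurableSet_Icc,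
    restrict_Ici_restrict_Icc]

section CausalFGS

variable {G : (ℝ → ℝ) → ℝ → ℝ} {h : ℝ} {v : ℝ → ℝ} {T : ℝ}

lemma eLpNorm_Ioc_le_of_causal_of_FGS (hG : Causal G) (hGh : FGS G h) (hT : 0 < T)
    (hv : MemLp v 2 (volume.restrict (Ioc 0 T))) :
    eLpNorm (G v) 2 (volume.restrict (Ioc 0 T)) ≤
      ENNReal.ofReal h * eLpNorm v 2 (volume.restrict (Ioc 0 T)) := by
  have hcausal : G v =ᵐ[volume.restrict (Ioc 0 T)] G (trunc v T) :=
    ae_restrict_of_ae_restrict_of_subset Ioc_subset_Icc_self (hG v T hT)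
  calc eLpNorm (G v) 2 (volume.restrict (Ioc 0 T))
      = eLpNorm (G (trunc v T)) 2 (volume.restrict (Ioc 0 T)) := eLpNorm_congr_ae hcausal
    _ ≤ eLpNorm (G (trunc v T)) 2 (volume.restrict (Ici 0)) :=
      eLpNorm_mono_measure _
        (Measure.restrict_mono (Ioc_subset_Ioi_self.trans Ioi_subset_Ici_self) le_rfl)
    _ ≤ ENNReal.ofReal h * eLpNorm (trunc v T) 2 (volume.restrict (Ici 0)) :=
      (hGh _ (memL2pos_trunc_iff.2 hv)).2
    _ = ENNReal.ofReal h * eLpNorm v 2 (volume.restrict (Ioc 0 T)) := by rw [eLpNorm_trunc]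

lemma eLpNorm_windowMeasure_le_of_causal_of_FGS (hG : Causal G) (hGh : FGS G h) (hT : 0 < T)
    (hv : MemLp v 2 (volume.restrict (Ioc 0 T))) :
    eLpNorm (G v) 2 (windowMeasure T) ≤ ENNReal.ofReal h * eLpNorm v 2 (windowMeasure T) := by
  rw [eLpNorm_windowMeasure, eLpNorm_windowMeasure, mul_left_comm]
  gcongr
  exact eLpNorm_Ioc_le_of_causal_of_FGS hG hGh hT hv

lemma limsup_eLpNorm_windowMeasure_le_of_causal_of_FGS (hG : Causal G) (hGh : FGS G h)
    {w u : ℝ → ℝ} (hw : MemL2pos w) (hu : ∀ T : ℝ, 0 < T → MemLp u 2 (volume.restrict (Ioc 0 T))) :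
    limsup (fun T => eLpNorm (G (w + u)) 2 (windowMeasure T)) atTop ≤
      ENNReal.ofReal h * limsup (fun T => eLpNorm u 2 (windowMeasure T)) atTop := by
  set rms : (ℝ → ℝ) → ℝ → ℝ≥0∞ := fun f T => eLpNorm f 2 (windowMeasure T)
  have hwT : ∀ T, MemLp w 2 (volume.restrict (Ioc 0 T)) := fun T =>
    hw.mono_measure (Measure.restrict_mono (Ioc_subset_Ioi_self.trans Ioi_subset_Ici_self) le_rfl)
  have hwindow : ∀ᶠ T in atTop, rms (G (w + u)) T ≤ ENNReal.ofReal h * (rms w T + rms u T) := by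
    filter_upwards [eventually_gt_atTop 0] with T hT
    calc rms (G (w + u)) T ≤ ENNReal.ofReal h * rms (w + u) T :=
          eLpNorm_windowMeasure_le_of_causal_of_FGS hG hGh hT ((hwT T).add (hu T hT))
      _ ≤ ENNReal.ofReal h * (rms w T + rms u T) := by
          gcongr
          exact eLpNorm_add_le ((hwT T).1.smul_measure _) ((hu T hT).1.smul_measure _) one_le_two
  calc limsup (rms (G (w + u))) atTop
      ≤ limsup (fun T => ENNReal.ofReal h * (rms w T + rms u T)) atTop := limsup_le_limsup hwindow
    _ = ENNReal.ofReal h * limsup (rms u) atTop := by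
        rw [ENNReal.limsup_const_mul_of_ne_top ENNReal.ofReal_ne_top]
        exact congrArg _ (ENNReal.limsup_add_of_left_tendsto_zero
          (tendsto_eLpNorm_windowMeasure_of_memL2pos hw) _)

lemma powerSq_add_le_of_causal_of_FGS (hG : Causal G) (hGh : FGS G h) {w u : ℝ → ℝ}
    (hw : MemL2pos w) (hu : Measurable u)
    (hu_loc : ∀ T : ℝ, 0 < T → IntegrableOn (fun t => u t ^ 2) (Ioc 0 T)) :
    powerSq (G (w + u)) ≤ ENNReal.ofReal (h ^ 2) * powerSq u := by
  have huT : ∀ T, 0 < T → MemLp u 2 (volume.restrict (Ioc 0 T)) := fun T hT =>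
    (memLp_two_iff_integrable_sq hu.aestronglyMeasurable).2 (hu_loc T hT)
  calc powerSq (G (w + u))
      ≤ limsup (fun T => eLpNorm (G (w + u)) 2 (windowMeasure T)) atTop ^ 2 :=
        powerSq_le_sq_limsup _
    _ ≤ ENNReal.ofReal h ^ 2 * limsup (fun T => eLpNorm u 2 (windowMeasure T)) atTop ^ 2 := by
        rw [← mul_pow]
        gcongr
        exact limsup_eLpNorm_windowMeasure_le_of_causal_of_FGS hG hGh hw huT
    _ ≤ ENNReal.ofReal (h ^ 2) * powerSq u := by
        rw [powerSq_eq_sq_limsup hu_loc]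
        gcongr
        exact ENNReal.sq_ofReal_le_ofReal_sq h

end CausalFGS

lemma offsetOp_sub_bias (H : (ℝ → ℝ) → ℝ → ℝ) (H₀ : ℝ → ℝ) (c : ℝ) (u : ℝ → ℝ) :
    offsetOp H H₀ c (fun t => u t - c * heaviside t) = fun t => H u t - H₀ c * heaviside t := by
  funext t
  simp only [offsetOp, sub_add_cancel]

theorem power_of_bias_plus_power_input_general (H : (ℝ → ℝ) → ℝ → ℝ) (H₀ : ℝ → ℝ)
    (h : ℝ)
    (hfgos : ∀ c : ℝ, Causal (offsetOp H H₀ c) ∧ FGS (offsetOp H H₀ c) h)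
    (u₁ u₂ : ℝ → ℝ) (hu₂ : Measurable u₂)
    (ubar₁ : ℝ) (hu₁bias : MemL2pos (fun t => u₁ t - ubar₁ * heaviside t))
    (hu₂loc : ∀ T : ℝ, 0 < T → IntegrableOn (fun t => (u₂ t) ^ 2) (Set.Ioc 0 T)) :
    powerSq (fun t => H (fun s => u₁ s + u₂ s) t - H₀ ubar₁ * heaviside t) ≤
      ENNReal.ofReal (h ^ 2) * powerSq u₂ := by
  obtain ⟨hcausal, hfgs⟩ := hfgos ubar₁
  have hshift : (fun t => H (fun s => u₁ s + u₂ s) t - H₀ ubar₁ * heaviside t) =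
      offsetOp H H₀ ubar₁ ((fun t => u₁ t - ubar₁ * heaviside t) + u₂) := by
    rw [← offsetOp_sub_bias]
    congr 1
    funext t
    simp only [Pi.add_apply]
    ring
  rw [hshift]
  exact powerSq_add_le_of_causal_of_FGS hcausal hfgs hu₁bias hu₂ hu₂loc

/-- If `H` is finite-gain offset stable with steady-state map `H₀` and offset gain at
most `h` (i.e. every offset operator `H_c` is causal and FGS with gain at most `h`),
`u₁` is an `L²`-bias signal with bias `ū₁` and `u₂` is a power signal, then
`‖H(u₁ + u₂) − H₀(ū₁)·𝟙‖_P² ≤ h² ‖u₂‖_P²`. -/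
theorem power_of_bias_plus_power_input (H : (ℝ → ℝ) → ℝ → ℝ) (H₀ : ℝ → ℝ)
    (hmeas : ∀ u : ℝ → ℝ, Measurable u → Measurable (H u))
    (h : ℝ) (hh : 0 ≤ h)
    (hfgos : ∀ c : ℝ, Causal (offsetOp H H₀ c) ∧ FGS (offsetOp H H₀ c) h)
    (u₁ u₂ : ℝ → ℝ) (hu₁ : Measurable u₁) (hu₂ : Measurable u₂)
    (hu₁supp : ∀ t : ℝ, t < 0 → u₁ t = 0) (hu₂supp : ∀ t : ℝ, t < 0 → u₂ t = 0)
    (ubar₁ : ℝ) (hu₁bias : MemL2pos (fun t => u₁ t - ubar₁ * heaviside t))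
    (hu₂loc : ∀ T : ℝ, 0 < T → IntegrableOn (fun t => (u₂ t) ^ 2) (Set.Ioc 0 T))
    (hu₂pow : powerSq u₂ < ⊤) :
    powerSq (fun t => H (fun s => u₁ s + u₂ s) t - H₀ ubar₁ * heaviside t) ≤
      ENNReal.ofReal (h ^ 2) * powerSq u₂ :=
  power_of_bias_plus_power_input_general H H₀ h hfgos u₁ u₂ hu₂ ubar₁ hu₁bias hu₂loc
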